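/- Let $X_1,\dots,X_n$ be independent random variables with $\mathbb{P}(X_i=1)=p_i$ and $\mathbb{P}(X_i=0)=1-p_i$, where $p_i = 1/2+\varepsilon_i$ with $\varepsilon_i\in[0,1/2]$. If $\frac{1}{\sqrt{n}}\sum_{i=1}^n \varepsilon_i \to \infty$ as $n\to\infty$, then $\mathbb{P}\left(\sum_{i=1}^n X_i > n/2\right) \to 1$ as $n\to\infty$. -/

import Mathlib

open MeasureTheory ProbabilityTheory Filter Finset

lemma aux_ae01 {Ω : Type*} [MeasurableSpace Ω] (μ : Measure Ω) [IsProbabilityMeasure μ]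
    (X : Ω → ℝ) (hX : Measurable X) (p : ℝ) (hp0 : 0 ≤ p) (hp1 : p ≤ 1)
    (h1 : μ {ω | X ω = 1} = ENNReal.ofReal p)
    (h0 : μ {ω | X ω = 0} = ENNReal.ofReal (1 - p)) :
    ∀ᵐ ω ∂μ, X ω = 1 ∨ X ω = 0 := by
  have hA : MeasurableSet {ω | X ω = 1} := hX (measurableSet_singleton 1)
  have hB : MeasurableSet {ω | X ω = 0} := hX (measurableSet_singleton 0)
  have hdisj : Disjoint {ω | X ω = 1} {ω | X ω = 0} := by
    rw [Set.disjoint_left]; intro ω hω1 hω0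
    simp only [Set.mem_setOf_eq] at *
    rw [hω1] at hω0; norm_num at hω0
  have hu : μ ({ω | X ω = 1} ∪ {ω | X ω = 0}) = 1 := by
    rw [measure_union hdisj hB, h1, h0, ← ENNReal.ofReal_add hp0 (by linarith)]
    norm_num
  have hc : μ ({ω | X ω = 1} ∪ {ω | X ω = 0})ᶜ = 0 := by
    rw [prob_compl_eq_one_sub (hA.union hB), hu]; simp
  have := measure_eq_zero_iff_ae_notMem.mp hc
  filter_upwards [this] with ω hω
  simpa [Set.mem_union, Set.mem_setOf_eq] using not_not.mp hω

/-- Condorcet Jury Property under simple majority for independent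
Bernoulli voters with competences `p i = 1/2 + ε i`, assuming
`(∑ i < n, ε i)/√n → ∞`. -/
theorem stmt_0
    {Ω : Type*} [MeasurableSpace Ω] (μ : Measure Ω) [IsProbabilityMeasure μ]
    (X : ℕ → Ω → ℝ) (hmeas : ∀ i, Measurable (X i))
    (hindep : iIndepFun X μ)
    (p ε : ℕ → ℝ) (hε : ∀ i, ε i ∈ Set.Icc (0 : ℝ) (1/2))
    (hp : ∀ i, p i = 1/2 + ε i)
    (h1 : ∀ i, μ {ω | X i ω = 1} = ENNReal.ofReal (p i))
    (h0 : ∀ i, μ {ω | X i ω = 0} = ENNReal.ofReal (1 - p i))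
    (hdiv : Tendsto (fun n : ℕ => (∑ i ∈ range n, ε i) / Real.sqrt n) atTop atTop) :
    Tendsto (fun n : ℕ => μ {ω | (n : ℝ) / 2 < ∑ i ∈ range n, X i ω}) atTop (nhds 1) := by
  have hp01 : ∀ i, 0 ≤ p i ∧ p i ≤ 1 := by
    intro i; obtain ⟨a, b⟩ := hε i; rw [hp i]; constructor <;> linarith
  have hae : ∀ i, ∀ᵐ ω ∂μ, X i ω = 1 ∨ X i ω = 0 := fun i =>
    aux_ae01 μ (X i) (hmeas i) (p i) (hp01 i).1 (hp01 i).2 (h1 i) (h0 i)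
  have hmem : ∀ i, MemLp (X i) 2 μ := by
    intro i
    refine (memLp_top_of_bound (hmeas i).aestronglyMeasurable 1 ?_).mono_exponent le_top
    filter_upwards [hae i] with ω h
    rcases h with h | h <;> simp [h]
  have hint : ∀ i, Integrable (X i) μ := fun i => (hmem i).integrable (by norm_num)
  have hE : ∀ i, μ[X i] = p i := by
    intro i
    have heq : X i =ᵐ[μ] ({ω | X i ω = 1}).indicator (fun _ => (1:ℝ)) := by
      filter_upwards [hae i] with ω h
      rcases h with h | h
      · rw [h, Set.indicator_of_mem]; exact h
      · rw [h, Set.indicator_of_notMem]; simp [Set.mem_setOf_eq, h]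
    have hms : MeasurableSet {ω | X i ω = 1} := hmeas i (measurableSet_singleton 1)
    rw [integral_congr_ae heq, integral_indicator_const _ hms,
      measureReal_def, h1 i, smul_eq_mul, mul_one, ENNReal.toReal_ofReal (hp01 i).1]
  have hVar : ∀ i, variance (X i) μ ≤ 1/4 := by
    intro i
    have hsq : (X i ^ 2) =ᵐ[μ] X i := by
      filter_upwards [hae i] with ω h
      rcases h with h | h <;> simp [Pi.pow_apply, h]
    rw [variance_eq_sub (hmem i), integral_congr_ae hsq, hE i]
    nlinarith [(hp01 i).1, (hp01 i).2, sq_nonneg (p i - 1/2)]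
  set S : ℕ → Ω → ℝ := fun n => ∑ i ∈ range n, X i with hS
  set En : ℕ → ℝ := fun n => ∑ i ∈ range n, ε i with hEn
  have hSmem : ∀ n : ℕ, MemLp (S n) 2 μ := fun n => memLp_finset_sum' _ (fun i _ => hmem i)
  have hSE : ∀ n : ℕ, μ[S n] = (n:ℝ)/2 + En n := by
    intro n
    have : μ[S n] = ∫ ω, ∑ i ∈ range n, X i ω ∂μ := by
      apply integral_congr_ae; filter_upwards with ω; simp [hS, Finset.sum_apply]
    rw [this, integral_finset_sum _ (fun i _ => hint i)]
    simp_rw [hE, hp]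
    rw [Finset.sum_add_distrib, Finset.sum_const, card_range, hEn]
    push_cast; ring
  have hSVar : ∀ n : ℕ, variance (S n) μ ≤ (n:ℝ)/4 := by
    intro n
    rw [hS]
    rw [IndepFun.variance_sum (fun i _ => hmem i)
      (fun i _ j _ hij => hindep.indepFun hij)]
    calc ∑ i ∈ range n, variance (X i) μ ≤ ∑ _i ∈ range n, (1/4 : ℝ) :=
        Finset.sum_le_sum (fun i _ => hVar i)
      _ = (n:ℝ)/4 := by rw [Finset.sum_const, card_range]; ring
  have hEpos : ∀ᶠ n in atTop, 0 < En n := by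
    filter_upwards [hdiv.eventually_gt_atTop 0, eventually_ge_atTop 1] with n hn hn1
    have h₁ : (0:ℝ) < Real.sqrt n := Real.sqrt_pos.mpr (by exact_mod_cast Nat.pos_of_ne_zero (by omega))
    have := mul_pos hn h₁
    rw [div_mul_cancel₀] at this
    · exact this
    · exact ne_of_gt h₁
  have hbound : ∀ᶠ n in atTop,
      μ {ω | S n ω ≤ (n:ℝ)/2} ≤ ENNReal.ofReal ((n:ℝ)/4 / (En n)^2) := by
    filter_upwards [hEpos] with n hn
    have hcheb := meas_ge_le_variance_div_sq (hSmem n) hn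
    refine le_trans (measure_mono ?_) (le_trans hcheb (ENNReal.ofReal_le_ofReal ?_))
    · intro ω hω
      simp only [Set.mem_setOf_eq] at hω ⊢
      rw [hSE n]
      calc En n ≤ -(S n ω - ((n:ℝ)/2 + En n)) := by linarith
        _ ≤ |S n ω - ((n:ℝ)/2 + En n)| := neg_le_abs _
    · have h2 : (0:ℝ) < (En n)^2 := by positivity
      exact div_le_div_of_nonneg_right (hSVar n) h2.le
  have hratio : Tendsto (fun n : ℕ => (n:ℝ)/4 / (En n)^2) atTop (nhds 0) := by
    have h1' : Tendsto (fun n : ℕ => Real.sqrt n / En n) atTop (nhds 0) := by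
      have h := hdiv.inv_tendsto_atTop
      refine h.congr fun n => ?_
      simp [Pi.inv_apply, inv_div, hEn]
    have h2' : Tendsto (fun n : ℕ => (Real.sqrt n / En n)^2 / 4) atTop (nhds 0) := by
      simpa using ((h1'.pow 2).div_const 4)
    refine h2'.congr' ?_
    filter_upwards with n
    rw [div_pow, Real.sq_sqrt (by positivity)]
    ring
  have hto0 : Tendsto (fun n => μ {ω | S n ω ≤ (n:ℝ)/2}) atTop (nhds 0) := by
    have h3' : Tendsto (fun n : ℕ => ENNReal.ofReal ((n:ℝ)/4 / (En n)^2)) atTop (nhds 0) := by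
      rw [← ENNReal.ofReal_zero]
      exact ENNReal.tendsto_ofReal hratio
    exact tendsto_of_tendsto_of_tendsto_of_le_of_le' tendsto_const_nhds h3'
      (Eventually.of_forall fun n => zero_le) hbound
  have hcompl : ∀ n : ℕ, μ {ω | (n:ℝ)/2 < ∑ i ∈ range n, X i ω}
      = 1 - μ {ω | S n ω ≤ (n:ℝ)/2} := by
    intro n
    have hmeasS : Measurable (S n) := by
      have hSe : S n = fun ω => ∑ i ∈ range n, X i ω := by
        funext ω; simp [hS]
      rw [hSe]; exact Finset.measurable_sum _ fun i _ => hmeas i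
    have hms : MeasurableSet {ω | S n ω ≤ (n:ℝ)/2} :=
      measurableSet_le hmeasS measurable_const
    rw [← prob_compl_eq_one_sub hms]
    congr 1
    ext ω
    simp only [Set.mem_compl_iff, Set.mem_setOf_eq, not_le, hS, Finset.sum_apply]
  simp_rw [hcompl]
  have := ENNReal.Tendsto.sub (tendsto_const_nhds (x := (1:ENNReal))) hto0
    (Or.inl ENNReal.one_ne_top)
  simpa using this
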